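/- arXiv:1206.3183 — 3 statements merged into one kernel-verified Lean document; each statement's English description precedes it below -/
import Mathlib

section
/- The permutation class Av(321, 2143) is the union of the two monotone grid classes with gridding matrices (1 1) (a single row of two increasing cells) and its transpose (a single column of two increasing cells). Equivalently, a permutation σ of length n avoids both 321 and 2143 if and only if either there is a position cut 0 ≤ k ≤ n such that σ is increasing on positions 1,…,k and increasing on positions k+1,…,n, or there is a value cut 0 ≤ m ≤ n such that the positions carrying values ≤ m form an increasing subsequence of σ and the positions carrying values > m form an increasing subsequence of σ. -/
/-- `σ` contains the pattern given by the (distinct) values `p : Fin k → ℕ`. -/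
def Contains {n k : ℕ} (σ : Equiv.Perm (Fin n)) (p : Fin k → ℕ) : Prop :=
  ∃ f : Fin k → Fin n, StrictMono f ∧ ∀ a b : Fin k, σ (f a) < σ (f b) ↔ p a < p b

/-- `σ` avoids the pattern `p`. -/
def Avoids {n k : ℕ} (σ : Equiv.Perm (Fin n)) (p : Fin k → ℕ) : Prop :=
  ¬ Contains σ p

/-- Position `p` lies in the cell in column `i`, row `j` determined by the
column cuts `x` and row cuts `y`. -/
def InCell {n c r : ℕ} (x : Fin (c + 1) → ℕ) (y : Fin (r + 1) → ℕ)
    (σ : Equiv.Perm (Fin n)) (i : Fin c) (j : Fin r) (p : Fin n) : Prop :=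
  x i.castSucc ≤ (p : ℕ) ∧ (p : ℕ) < x i.succ ∧
    y j.castSucc ≤ ((σ p : Fin n) : ℕ) ∧ ((σ p : Fin n) : ℕ) < y j.succ

/-- `σ` lies in the (monotone) grid class of the matrix `M`, indexed by
column (left to right) then row (bottom to top).  Entry `0` means an empty
cell, `1` an increasing cell, `-1` a decreasing cell, and `2` a point cell
(at most one point). -/
def InGrid {n c r : ℕ} (M : Fin c → Fin r → ℤ) (σ : Equiv.Perm (Fin n)) : Prop :=
  ∃ (x : Fin (c + 1) → ℕ) (y : Fin (r + 1) → ℕ),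
    Monotone x ∧ Monotone y ∧
    x 0 = 0 ∧ x (Fin.last c) = n ∧ y 0 = 0 ∧ y (Fin.last r) = n ∧
    ∀ (i : Fin c) (j : Fin r),
      (M i j = 0 → ∀ p : Fin n, ¬ InCell x y σ i j p) ∧
      (M i j = 1 → ∀ p q : Fin n,
        InCell x y σ i j p → InCell x y σ i j q → p < q → σ p < σ q) ∧
      (M i j = -1 → ∀ p q : Fin n,
        InCell x y σ i j p → InCell x y σ i j q → p < q → σ q < σ p) ∧
      (M i j = 2 → ∀ p q : Fin n,
        InCell x y σ i j p → InCell x y σ i j q → p = q)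

/-- A permutation is simple if its only intervals (sets of consecutive
positions mapped to consecutive values) are singletons and the whole domain. -/
def IsSimple {n : ℕ} (σ : Equiv.Perm (Fin n)) : Prop :=
  ∀ a b : Fin n, a ≤ b →
    (∃ c d : Fin n, (⇑σ) '' Set.Icc a b = Set.Icc c d) →
    a = b ∨ Set.Icc a b = (Set.univ : Set (Fin n))

/-- `σ` is sum-decomposable: a proper nonempty prefix of positions is mapped
to the corresponding prefix of values. -/
def SumDecomposable {n : ℕ} (σ : Equiv.Perm (Fin n)) : Prop :=
  ∃ k : ℕ, 0 < k ∧ k < n ∧ ∀ i : Fin n, ((i : ℕ) < k ↔ ((σ i : Fin n) : ℕ) < k)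

/-- `σ` is skew-decomposable: a proper nonempty prefix of positions is mapped
to the corresponding suffix of values. -/
def SkewDecomposable {n : ℕ} (σ : Equiv.Perm (Fin n)) : Prop :=
  ∃ k : ℕ, 0 < k ∧ k < n ∧ ∀ i : Fin n, ((i : ℕ) < k ↔ n - k ≤ ((σ i : Fin n) : ℕ))

/-- The number of descents of `σ`. -/
noncomputable def descentCount {n : ℕ} (σ : Equiv.Perm (Fin n)) : ℕ :=
  Nat.card {i : Fin n // ∃ j : Fin n, (j : ℕ) = (i : ℕ) + 1 ∧ σ j < σ i}

def gridRow : Fin 2 → Fin 1 → ℤ :=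
  ![![1], ![1]]
def gridCol : Fin 1 → Fin 2 → ℤ :=
  ![![1, 1]]

/-!
Both grid classes are described by a cut that every inversion straddles: a position `k` with
`p < k ≤ q` for every inversion `p < q`, `σ q < σ p` (class of `gridRow`), or a value `m` with
`σ q < m ≤ σ p` (class of `gridCol`). Such a cut visibly forbids 321 and 2143.

Conversely, let `σ` avoid 321 and 2143. If `σ` has at most one descent, every inversion contains
it, so the position after it is a cut. Otherwise, suppose two inversions overlap in value. Avoiding
321 and 2143 forces them into a 2413, whose middle pair can be pushed onto a descent `t, t + 1`; any
other descent then completes a 321 or a 2143. So every inversion bottom lies below every inversion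
top, and a value cut separates them.
-/

section

variable {n : ℕ} {σ : Equiv.Perm (Fin n)}

theorem contains_321_iff :
    Contains σ ![3, 2, 1] ↔ ∃ a b c, a < b ∧ b < c ∧ σ c < σ b ∧ σ b < σ a := by
  constructor
  · rintro ⟨f, hf, hσf⟩
    exact ⟨f 0, f 1, f 2, hf (by decide), hf (by decide), (hσf 2 1).2 (by decide),
      (hσf 1 0).2 (by decide)⟩
  · rintro ⟨a, b, c, hab, hbc, hcb, hba⟩
    refine ⟨![a, b, c], ?_, fun i j => ?_⟩
    · simp [Fin.strictMono_iff_lt_succ, Fin.forall_fin_succ, hab, hbc]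
    · fin_cases i <;> fin_cases j <;>
        simp only [Fin.reduceFinMk, Fin.zero_eta, Fin.mk_one, Matrix.cons_val,
          Matrix.cons_val_zero, Matrix.cons_val_one] <;>
        omega

theorem contains_2143_iff :
    Contains σ ![2, 1, 4, 3] ↔ ∃ a b c d, a < b ∧ b < c ∧ c < d ∧
      σ b < σ a ∧ σ a < σ d ∧ σ d < σ c := by
  constructor
  · rintro ⟨f, hf, hσf⟩
    exact ⟨f 0, f 1, f 2, f 3, hf (by decide), hf (by decide), hf (by decide),
      (hσf 1 0).2 (by decide), (hσf 0 3).2 (by decide), (hσf 3 2).2 (by decide)⟩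
  · rintro ⟨a, b, c, d, hab, hbc, hcd, hba, had, hdc⟩
    refine ⟨![a, b, c, d], ?_, fun i j => ?_⟩
    · simp [Fin.strictMono_iff_lt_succ, Fin.forall_fin_succ, hab, hbc, hcd]
    · fin_cases i <;> fin_cases j <;>
        simp only [Fin.reduceFinMk, Fin.zero_eta, Fin.mk_one, Matrix.cons_val,
          Matrix.cons_val_zero, Matrix.cons_val_one] <;>
        omega

def IsPositionCut (σ : Equiv.Perm (Fin n)) (k : ℕ) : Prop :=
  ∀ p q : Fin n, p < q → σ q < σ p → (p : ℕ) < k ∧ k ≤ (q : ℕ)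

def IsValueCut (σ : Equiv.Perm (Fin n)) (m : ℕ) : Prop :=
  ∀ p q : Fin n, p < q → σ q < σ p → ((σ q : Fin n) : ℕ) < m ∧ m ≤ ((σ p : Fin n) : ℕ)

theorem inGrid_gridRow_iff : InGrid gridRow σ ↔ ∃ k ≤ n, IsPositionCut σ k := by
  constructor
  · rintro ⟨x, y, hx, -, hx0, hxn, hy0, hyn, hcell⟩
    simp only [Fin.reduceLast] at hxn hyn
    have left := (hcell 0 0).2.1 rfl
    have right := (hcell 1 0).2.1 rfl
    simp only [InCell, Fin.castSucc_zero, Fin.succ_zero_eq_one, Fin.castSucc_one,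
      Fin.succ_one_eq_two, hx0, hy0, hxn, hyn, zero_le, Fin.is_lt, true_and, and_true] at left right
    refine ⟨x 1, hxn ▸ hx (by decide), fun p q hpq hqp => ⟨?_, ?_⟩⟩
    · by_contra
      exact (right p q (by omega) (by omega) hpq).not_gt hqp
    · by_contra
      exact (left p q (by omega) (by omega) hpq).not_gt hqp
  · rintro ⟨k, hkn, hk⟩
    refine ⟨![0, k, n], ![0, n], by simp [Fin.monotone_iff_le_succ, Fin.forall_fin_succ, hkn],
      by simp [Fin.monotone_iff_le_succ, Fin.forall_fin_succ], rfl, rfl, rfl, rfl, fun i j => ?_⟩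
    have increasing : ∀ p q : Fin n, p < q → ¬ ((p : ℕ) < k ∧ k ≤ q) → σ p < σ q :=
      fun p q hpq h => lt_of_le_of_ne (le_of_not_gt fun hqp => h (hk p q hpq hqp))
        (σ.injective.ne hpq.ne)
    fin_cases i <;> fin_cases j <;>
      refine ⟨fun h => absurd h (by decide), fun _ p q hp hq hpq => increasing p q hpq ?_,
        fun h => absurd h (by decide), fun h => absurd h (by decide)⟩
    · have : (q : ℕ) < k := hq.2.1
      omega
    · have : k ≤ (p : ℕ) := hp.1
      omega

theorem inGrid_gridCol_iff : InGrid gridCol σ ↔ ∃ m ≤ n, IsValueCut σ m := by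
  constructor
  · rintro ⟨x, y, -, hy, hx0, hxn, hy0, hyn, hcell⟩
    simp only [Fin.reduceLast] at hxn hyn
    have bottom := (hcell 0 0).2.1 rfl
    have top := (hcell 0 1).2.1 rfl
    simp only [InCell, Fin.castSucc_zero, Fin.succ_zero_eq_one, Fin.castSucc_one,
      Fin.succ_one_eq_two, hx0, hy0, hxn, hyn, zero_le, Fin.is_lt, true_and, and_true] at bottom top
    refine ⟨y 1, hyn ▸ hy (by decide), fun p q hpq hqp => ⟨?_, ?_⟩⟩
    · by_contra
      exact (top p q (by omega) (by omega) hpq).not_gt hqp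
    · by_contra
      exact (bottom p q (by omega) (by omega) hpq).not_gt hqp
  · rintro ⟨m, hmn, hm⟩
    refine ⟨![0, n], ![0, m, n], by simp [Fin.monotone_iff_le_succ, Fin.forall_fin_succ],
      by simp [Fin.monotone_iff_le_succ, Fin.forall_fin_succ, hmn], rfl, rfl, rfl, rfl,
      fun i j => ?_⟩
    have increasing : ∀ p q : Fin n, p < q → ¬ ((σ q : ℕ) < m ∧ m ≤ (σ p : ℕ)) → σ p < σ q :=
      fun p q hpq h => lt_of_le_of_ne (le_of_not_gt fun hqp => h (hm p q hpq hqp))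
        (σ.injective.ne hpq.ne)
    fin_cases i; fin_cases j <;>
      refine ⟨fun h => absurd h (by decide), fun _ p q hp hq hpq => increasing p q hpq ?_,
        fun h => absurd h (by decide), fun h => absurd h (by decide)⟩
    · have : (σ p : ℕ) < m := hp.2.2.2
      omega
    · have : m ≤ (σ q : ℕ) := hq.2.2.1
      omega

theorem IsPositionCut.avoids_321 {k : ℕ} (h : IsPositionCut σ k) : Avoids σ ![3, 2, 1] := by
  rw [Avoids, contains_321_iff]
  rintro ⟨a, b, c, hab, hbc, hcb, hba⟩
  have := h a b hab hba
  have := h b c hbc hcb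
  omega

theorem IsPositionCut.avoids_2143 {k : ℕ} (h : IsPositionCut σ k) : Avoids σ ![2, 1, 4, 3] := by
  rw [Avoids, contains_2143_iff]
  rintro ⟨a, b, c, d, hab, hbc, hcd, hba, -, hdc⟩
  have := h a b hab hba
  have := h c d hcd hdc
  omega

theorem IsValueCut.avoids_321 {m : ℕ} (h : IsValueCut σ m) : Avoids σ ![3, 2, 1] := by
  rw [Avoids, contains_321_iff]
  rintro ⟨a, b, c, hab, hbc, hcb, hba⟩
  have := h a b hab hba
  have := h b c hbc hcb
  omega

theorem IsValueCut.avoids_2143 {m : ℕ} (h : IsValueCut σ m) : Avoids σ ![2, 1, 4, 3] := by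
  rw [Avoids, contains_2143_iff]
  rintro ⟨a, b, c, d, hab, -, hcd, hba, had, hdc⟩
  have := h a b hab hba
  have := h c d hcd hdc
  omega

theorem exists_separating_cut {ι : Type*} [Fintype ι] (lo hi : ι → Fin n)
    (h : ∀ i j, lo i < hi j) : ∃ m ≤ n, ∀ i, (lo i : ℕ) < m ∧ m ≤ (hi i : ℕ) :=
  ⟨Finset.univ.sup fun i => (lo i : ℕ) + 1, Finset.sup_le fun i _ => (lo i).isLt,
    fun i => ⟨Finset.le_sup (f := fun i => (lo i : ℕ) + 1) (Finset.mem_univ i),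
      Finset.sup_le fun j _ => h j i⟩⟩

theorem exists_isPositionCut
    (h : ∀ p₁ q₁ p₂ q₂ : Fin n, p₁ < q₁ → σ q₁ < σ p₁ → p₂ < q₂ → σ q₂ < σ p₂ → p₁ < q₂) :
    ∃ k ≤ n, IsPositionCut σ k := by
  classical
  obtain ⟨k, hkn, hk⟩ := exists_separating_cut
    (ι := {pq : Fin n × Fin n // pq.1 < pq.2 ∧ σ pq.2 < σ pq.1}) (fun pq => pq.1.1)
    (fun pq => pq.1.2) fun i j => h _ _ _ _ i.2.1 i.2.2 j.2.1 j.2.2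
  exact ⟨k, hkn, fun p q hpq hqp => hk ⟨(p, q), hpq, hqp⟩⟩

theorem exists_isValueCut
    (h : ∀ p₁ q₁ p₂ q₂ : Fin n, p₁ < q₁ → σ q₁ < σ p₁ → p₂ < q₂ → σ q₂ < σ p₂ → σ q₁ < σ p₂) :
    ∃ m ≤ n, IsValueCut σ m := by
  classical
  obtain ⟨m, hmn, hm⟩ := exists_separating_cut
    (ι := {pq : Fin n × Fin n // pq.1 < pq.2 ∧ σ pq.2 < σ pq.1}) (fun pq => σ pq.1.2)
    (fun pq => σ pq.1.1) fun i j => h _ _ _ _ i.2.1 i.2.2 j.2.1 j.2.2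
  exact ⟨m, hmn, fun p q hpq hqp => hm ⟨(p, q), hpq, hqp⟩⟩

theorem exists_descent_between {α : Type*} [LinearOrder α] {f : Fin n → α} {p q : Fin n}
    {v : α} (hpq : p ≤ q) (hq : f q < v) (hp : v ≤ f p) :
    ∃ t t' : Fin n, (t' : ℕ) = t + 1 ∧ p ≤ t ∧ t' ≤ q ∧ f t' < v ∧ v ≤ f t := by
  obtain ⟨d, hd⟩ : ∃ d, (q : ℕ) = p + d := ⟨q - p, by omega⟩
  induction d generalizing p with
  | zero =>
    obtain rfl : p = q := Fin.ext (by omega)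
    exact absurd (hq.trans_le hp) (lt_irrefl _)
  | succ d ih =>
    let p' : Fin n := ⟨p + 1, by omega⟩
    have hp' : (p' : ℕ) = p + 1 := rfl
    by_cases hv : f p' < v
    · exact ⟨p, p', hp', le_rfl, by omega, hv, hp⟩
    · obtain ⟨t, t', ht, hpt, htq, hft', hft⟩ := ih (by omega) (not_lt.1 hv) (by omega)
      exact ⟨t, t', ht, by omega, htq, hft', hft⟩

theorem exists_isPositionCut_of_descents_eq
    (h : ∀ d d' e e' : Fin n, (d' : ℕ) = d + 1 → (e' : ℕ) = e + 1 → σ d' < σ d → σ e' < σ e →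
      d = e) :
    ∃ k ≤ n, IsPositionCut σ k := by
  refine exists_isPositionCut fun p₁ q₁ p₂ q₂ h₁ hσ₁ h₂ hσ₂ => ?_
  obtain ⟨s, s', hs, hps, hs'q, hσs', hσs⟩ := exists_descent_between h₁.le hσ₁ le_rfl
  obtain ⟨t, t', ht, hpt, ht'q, hσt', hσt⟩ := exists_descent_between h₂.le hσ₂ le_rfl
  have := h s s' t t' hs ht (hσs'.trans_le hσs) (hσt'.trans_le hσt)
  omega

theorem descent_values_interleave (hA : Avoids σ ![3, 2, 1]) (hB : Avoids σ ![2, 1, 4, 3])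
    {e e' t t' : Fin n} (he : (e' : ℕ) = e + 1) (ht : (t' : ℕ) = t + 1)
    (hee : σ e' < σ e) (htt : σ t' < σ t) (het : e < t) :
    e' < t ∧ σ e' < σ t' ∧ σ t' < σ e ∧ σ e < σ t := by
  rw [Avoids, contains_321_iff] at hA
  rw [Avoids, contains_2143_iff] at hB
  have he't : e' < t :=
    lt_of_le_of_ne (by omega) fun h => hA ⟨e, e', t', by omega, by omega, h ▸ htt, hee⟩
  have hσet : σ e < σ t := (lt_or_gt_of_ne (σ.injective.ne het.ne)).resolve_right
    fun h => hA ⟨e, t, t', het, by omega, htt, h⟩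
  have hσt'e : σ t' < σ e := (lt_or_gt_of_ne (σ.injective.ne (by omega))).resolve_right
    fun h => hB ⟨e, e', t, t', by omega, he't, by omega, hee, h, htt⟩
  have hσe't' : σ e' < σ t' := (lt_or_gt_of_ne (σ.injective.ne (by omega))).resolve_right
    fun h => hA ⟨e, e', t', by omega, by omega, h, hee⟩
  exact ⟨he't, hσe't', hσt'e, hσet⟩

theorem exists_adjacent_2413 (hA : Avoids σ ![3, 2, 1]) {a b c d : Fin n}
    (hab : a < b) (hbc : b < c) (hcd : c < d)
    (hca : σ c < σ a) (had : σ a < σ d) (hdb : σ d < σ b) :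
    ∃ t t' : Fin n, (t' : ℕ) = t + 1 ∧ a < t ∧ t' < d ∧ σ t' < σ a ∧ σ d < σ t := by
  rw [Avoids, contains_321_iff] at hA
  obtain ⟨t, t', ht, hbt, ht'c, ht'a, hat⟩ :=
    exists_descent_between (f := σ) hbc.le hca (had.trans hdb).le
  refine ⟨t, t', ht, by omega, by omega, ht'a, lt_of_not_ge fun htd => ?_⟩
  have hbt : b < t := lt_of_le_of_ne hbt (by rintro rfl; exact (htd.trans_lt hdb).false)
  exact hA ⟨b, t, t', hbt, by omega, by omega, by omega⟩

theorem descent_eq_of_adjacent_2413 (hA : Avoids σ ![3, 2, 1]) (hB : Avoids σ ![2, 1, 4, 3])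
    {a t t' d : Fin n} (ht : (t' : ℕ) = t + 1) (hat : a < t) (ht'd : t' < d)
    (ht'a : σ t' < σ a) (had : σ a < σ d) (hdt : σ d < σ t)
    {e e' : Fin n} (he : (e' : ℕ) = e + 1) (hee : σ e' < σ e) : e = t := by
  have htt : σ t' < σ t := ht'a.trans (had.trans hdt)
  rcases lt_trichotomy e t with het | rfl | hte
  · obtain ⟨he't, hσe't', hσt'e, -⟩ := descent_values_interleave hA hB he ht hee htt het
    rw [Avoids, contains_321_iff] at hA
    rw [Avoids, contains_2143_iff] at hB
    exfalso
    rcases lt_or_ge a e with hae | hea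
    · exact hB ⟨a, e', t, d, by omega, he't, by omega, by omega, had, hdt⟩
    rcases lt_or_gt_of_ne (σ.injective.ne (show e ≠ d by omega)) with hσed | hσde
    · exact hB ⟨e, e', t, d, by omega, he't, by omega, hee, hσed, hdt⟩
    · have hea : e < a := lt_of_le_of_ne hea (by rintro rfl; exact (had.trans hσde).false)
      exact hA ⟨e, a, t', hea, by omega, ht'a, by omega⟩
  · rfl
  · obtain ⟨ht'e, hσt'e', -, hσte⟩ := descent_values_interleave hA hB ht he htt hee hte
    rw [Avoids, contains_321_iff] at hA
    rw [Avoids, contains_2143_iff] at hB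
    exfalso
    rcases lt_or_ge e' d with he'd | hde'
    · exact hB ⟨a, t', e, d, by omega, ht'e, by omega, ht'a, had, by omega⟩
    rcases lt_or_gt_of_ne (σ.injective.ne (show a ≠ e' by omega)) with hσae' | hσe'a
    · exact hB ⟨a, t', e, e', by omega, ht'e, by omega, ht'a, hσae', hee⟩
    · have hde' : d < e' := lt_of_le_of_ne hde' (by rintro rfl; exact (hσe'a.trans had).false)
      exact hA ⟨t, d, e', by omega, hde', by omega, hdt⟩

theorem overlapping_inversions_form_2413 (hA : Avoids σ ![3, 2, 1])
    (hB : Avoids σ ![2, 1, 4, 3]) {p₁ q₁ p₂ q₂ : Fin n} (h₁ : p₁ < q₁) (hσ₁ : σ q₁ < σ p₁)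
    (h₂ : p₂ < q₂) (hσ₂ : σ q₂ < σ p₂) (h : σ p₂ ≤ σ q₁) :
    p₂ < p₁ ∧ p₁ < q₂ ∧ q₂ < q₁ ∧ σ p₂ < σ q₁ := by
  rw [Avoids, contains_321_iff] at hA
  rw [Avoids, contains_2143_iff] at hB
  have hσ : σ p₂ < σ q₁ := lt_of_le_of_ne h fun heq =>
    hA ⟨p₁, q₁, q₂, h₁, σ.injective heq ▸ h₂, σ.injective heq ▸ hσ₂, hσ₁⟩
  refine ⟨?_, ?_, ?_, hσ⟩
  · exact lt_of_le_of_ne (le_of_not_gt fun h => hA ⟨p₁, p₂, q₂, h, h₂, hσ₂, by omega⟩)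
      (ne_of_apply_ne σ (by omega))
  · exact lt_of_le_of_ne (le_of_not_gt fun h => hB ⟨p₂, q₂, p₁, q₁, h₂, h, h₁, hσ₂, hσ, hσ₁⟩)
      (ne_of_apply_ne σ (by omega))
  · exact lt_of_le_of_ne (le_of_not_gt fun h => hA ⟨p₁, q₁, q₂, h₁, h, by omega, hσ₁⟩)
      (ne_of_apply_ne σ (by omega))

theorem exists_isValueCut_of_two_descents (hA : Avoids σ ![3, 2, 1])
    (hB : Avoids σ ![2, 1, 4, 3]) {d d' e e' : Fin n} (hd : (d' : ℕ) = d + 1)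
    (he : (e' : ℕ) = e + 1) (hdd : σ d' < σ d) (hee : σ e' < σ e) (hde : d ≠ e) :
    ∃ m ≤ n, IsValueCut σ m := by
  refine exists_isValueCut fun p₁ q₁ p₂ q₂ h₁ hσ₁ h₂ hσ₂ => lt_of_not_ge fun h => hde ?_
  obtain ⟨hp, hpq, hq, hσ⟩ := overlapping_inversions_form_2413 hA hB h₁ hσ₁ h₂ hσ₂ h
  obtain ⟨t, t', ht, hpt, ht'q, ht'p, hqt⟩ := exists_adjacent_2413 hA hp hpq hq hσ₂ hσ hσ₁
  exact (descent_eq_of_adjacent_2413 hA hB ht hpt ht'q ht'p hσ hqt hd hdd).trans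
    (descent_eq_of_adjacent_2413 hA hB ht hpt ht'q ht'p hσ hqt he hee).symm

end

theorem av_321_2143_is_union_of_two_grid_classes :
    ∀ (n : ℕ) (σ : Equiv.Perm (Fin n)),
      (Avoids σ ![3, 2, 1] ∧ Avoids σ ![2, 1, 4, 3]) ↔
        (InGrid gridRow σ ∨ InGrid gridCol σ) := by
  intro n σ
  rw [inGrid_gridRow_iff, inGrid_gridCol_iff]
  constructor
  · rintro ⟨hA, hB⟩
    by_cases h : ∃ d d' e e' : Fin n, (d' : ℕ) = d + 1 ∧ (e' : ℕ) = e + 1 ∧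
        σ d' < σ d ∧ σ e' < σ e ∧ d ≠ e
    · obtain ⟨d, d', e, e', hd, he, hdd, hee, hde⟩ := h
      exact Or.inr (exists_isValueCut_of_two_descents hA hB hd he hdd hee hde)
    · push Not at h
      exact Or.inl (exists_isPositionCut_of_descents_eq h)
  · rintro (⟨k, -, hk⟩ | ⟨m, -, hm⟩)
    · exact ⟨hk.avoids_321, hk.avoids_2143⟩
    · exact ⟨hm.avoids_321, hm.avoids_2143⟩
end

section
/- Let B be the 3×3 gridding matrix with entry 1 in cells (1,1), (1,2), (2,1), (3,3) (cells written as (column, row), columns left to right, rows bottom to top) and 0 elsewhere. Then the monotone grid class Grid(B) has basis {2143, 4321, 35142, 35214, 35241, 43152, 53142}; that is, a permutation lies in Grid(B) if and only if it avoids all of the patterns 2143, 4321, 35142, 35214, 35241, 43152 and 53142. -/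
def gridB : Fin 3 → Fin 3 → ℤ :=
  ![![1, 1, 0], ![1, 0, 0], ![0, 0, 1]]

structure AvoidsBasisB {n : ℕ} (σ : Equiv.Perm (Fin n)) : Prop where
  avoids_2143 : Avoids σ ![2, 1, 4, 3]
  avoids_4321 : Avoids σ ![4, 3, 2, 1]
  avoids_35142 : Avoids σ ![3, 5, 1, 4, 2]
  avoids_35214 : Avoids σ ![3, 5, 2, 1, 4]
  avoids_35241 : Avoids σ ![3, 5, 2, 4, 1]
  avoids_43152 : Avoids σ ![4, 3, 1, 5, 2]
  avoids_53142 : Avoids σ ![5, 3, 1, 4, 2]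

lemma exists_mem_cut_interval {c : ℕ} {x : Fin (c + 1) → ℕ} (hx : Monotone x) {p : ℕ}
    (h0 : x 0 ≤ p) (hc : p < x (Fin.last c)) : ∃ i : Fin c, x i.castSucc ≤ p ∧ p < x i.succ := by
  induction c with
  | zero => exact absurd (h0.trans_lt hc) (lt_irrefl _)
  | succ c ih =>
    by_cases hp : p < x (Fin.last c).castSucc
    · obtain ⟨i, hi⟩ := ih (x := x ∘ Fin.castSucc) (hx.comp Fin.strictMono_castSucc.monotone) h0 hp
      exact ⟨i.castSucc, hi⟩
    · exact ⟨Fin.last c, not_lt.1 hp, hc⟩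

section Cells

variable {n c r : ℕ} {x : Fin (c + 1) → ℕ} {y : Fin (r + 1) → ℕ} {σ : Equiv.Perm (Fin n)}
  {i i' : Fin c} {j j' : Fin r} {p q : Fin n}

lemma InCell.lt_of_col_lt (hx : Monotone x) (hp : InCell x y σ i j p)
    (hq : InCell x y σ i' j' q) (h : i < i') : p < q := by
  have := hx (Fin.succ_le_castSucc_iff.2 h)
  have := hp.2.1
  have := hq.1
  omega

lemma InCell.apply_lt_of_row_lt (hy : Monotone y) (hp : InCell x y σ i j p)
    (hq : InCell x y σ i' j' q) (h : j < j') : σ p < σ q := by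
  have := hy (Fin.succ_le_castSucc_iff.2 h)
  have := hp.2.2.2
  have := hq.2.2.1
  omega

end Cells

-- The nonzero cells of `gridB`, as (column, row).
def cellCol : Fin 4 → Fin 3 := ![0, 0, 1, 2]
def cellRow : Fin 4 → Fin 3 := ![0, 1, 0, 2]

lemma exists_cell_of_gridB_ne_zero : ∀ {i j : Fin 3}, gridB i j ≠ 0 →
    ∃ c, cellCol c = i ∧ cellRow c = j := by
  decide

lemma gridB_cell_eq_one : ∀ c, gridB (cellCol c) (cellRow c) = 1 := by
  decide

def IsBGridding {k : ℕ} (p : Fin k → ℕ) (L : Fin k → Fin 4) : Prop :=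
  ∀ a b, a < b → cellCol (L a) ≤ cellCol (L b) ∧
    (cellRow (L a) < cellRow (L b) → p a < p b) ∧
    (cellRow (L b) < cellRow (L a) → p b < p a) ∧ (L a = L b → p a < p b)

instance {k : ℕ} (p : Fin k → ℕ) (L : Fin k → Fin 4) : Decidable (IsBGridding p L) := by
  unfold IsBGridding; infer_instance

lemma exists_isBGridding_of_contains {n k : ℕ} {σ : Equiv.Perm (Fin n)} {p : Fin k → ℕ}
    (hσ : InGrid gridB σ) (hc : Contains σ p) : ∃ L, IsBGridding p L := by
  obtain ⟨x, y, hx, hy, hx0, hxn, hy0, hyn, hcell⟩ := hσ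
  obtain ⟨f, hf, hfp⟩ := hc
  have hloc (q : Fin n) : ∃ c, InCell x y σ (cellCol c) (cellRow c) q := by
    obtain ⟨i, hi⟩ := exists_mem_cut_interval hx (p := q) (by omega) (by omega)
    obtain ⟨j, hj⟩ := exists_mem_cut_interval hy (p := σ q) (by omega) (by omega)
    have hq : InCell x y σ i j q := ⟨hi.1, hi.2, hj.1, hj.2⟩
    obtain ⟨c, rfl, rfl⟩ := exists_cell_of_gridB_ne_zero fun h => (hcell i j).1 h q hq
    exact ⟨c, hq⟩
  choose L hL using fun a => hloc (f a)
  refine ⟨L, fun a b hab => ⟨?_, fun h => ?_, fun h => ?_, fun h => ?_⟩⟩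
  · exact not_lt.1 fun h => (hf hab).not_gt ((hL b).lt_of_col_lt hx (hL a) h)
  · exact (hfp a b).1 ((hL a).apply_lt_of_row_lt hy (hL b) h)
  · exact (hfp b a).1 ((hL b).apply_lt_of_row_lt hy (hL a) h)
  · exact (hfp a b).1 ((hcell _ _).2.1 (gridB_cell_eq_one _) _ _ (hL a) (h ▸ hL b) (hf hab))

lemma avoids_of_inGrid_gridB {n k : ℕ} {σ : Equiv.Perm (Fin n)} {p : Fin k → ℕ}
    (hσ : InGrid gridB σ) (hp : ∀ L, ¬ IsBGridding p L) : Avoids σ p := fun hc =>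
  let ⟨L, hL⟩ := exists_isBGridding_of_contains hσ hc
  hp L hL

lemma AvoidsBasisB.of_inGrid {n : ℕ} {σ : Equiv.Perm (Fin n)} (hσ : InGrid gridB σ) :
    AvoidsBasisB σ where
  avoids_2143 := avoids_of_inGrid_gridB hσ (by decide +kernel)
  avoids_4321 := avoids_of_inGrid_gridB hσ (by decide +kernel)
  avoids_35142 := avoids_of_inGrid_gridB hσ (by decide +kernel)
  avoids_35214 := avoids_of_inGrid_gridB hσ (by decide +kernel)
  avoids_35241 := avoids_of_inGrid_gridB hσ (by decide +kernel)
  avoids_43152 := avoids_of_inGrid_gridB hσ (by decide +kernel)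
  avoids_53142 := avoids_of_inGrid_gridB hσ (by decide +kernel)

lemma contains_of_forall_lt {n k : ℕ} {σ : Equiv.Perm (Fin n)} {p : Fin k → ℕ}
    (hp : p.Injective) (f : Fin k → Fin n) (hf : StrictMono f)
    (h : ∀ a b, p a < p b → σ (f a) < σ (f b)) : Contains σ p := by
  refine ⟨f, hf, fun a b => ⟨fun hab => ?_, h a b⟩⟩
  obtain hlt | heq | hgt := lt_trichotomy (p a) (p b)
  · exact hlt
  · exact absurd hab (by rw [hp heq]; exact lt_irrefl _)
  · exact absurd (h b a hgt) hab.not_gt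

section Patterns

variable {n : ℕ} {σ : Equiv.Perm (Fin n)}

lemma contains_2143 (i₁ i₂ i₃ i₄ : Fin n)
    (h : i₁ < i₂ ∧ i₂ < i₃ ∧ i₃ < i₄ ∧ σ i₂ < σ i₁ ∧ σ i₁ < σ i₄ ∧ σ i₄ < σ i₃) :
    Contains σ ![2, 1, 4, 3] := by
  refine contains_of_forall_lt (by decide) ![i₁, i₂, i₃, i₄] ?_ ?_
  · simp [Fin.strictMono_iff_lt_succ, Fin.forall_fin_succ]; omega
  · simp [Fin.forall_fin_succ]; omega

lemma contains_4321 (i₁ i₂ i₃ i₄ : Fin n)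
    (h : i₁ < i₂ ∧ i₂ < i₃ ∧ i₃ < i₄ ∧ σ i₄ < σ i₃ ∧ σ i₃ < σ i₂ ∧ σ i₂ < σ i₁) :
    Contains σ ![4, 3, 2, 1] := by
  refine contains_of_forall_lt (by decide) ![i₁, i₂, i₃, i₄] ?_ ?_
  · simp [Fin.strictMono_iff_lt_succ, Fin.forall_fin_succ]; omega
  · simp [Fin.forall_fin_succ]; omega

lemma contains_35142 (i₁ i₂ i₃ i₄ i₅ : Fin n)
    (h : i₁ < i₂ ∧ i₂ < i₃ ∧ i₃ < i₄ ∧ i₄ < i₅ ∧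
      σ i₃ < σ i₅ ∧ σ i₅ < σ i₁ ∧ σ i₁ < σ i₄ ∧ σ i₄ < σ i₂) :
    Contains σ ![3, 5, 1, 4, 2] := by
  refine contains_of_forall_lt (by decide) ![i₁, i₂, i₃, i₄, i₅] ?_ ?_
  · simp [Fin.strictMono_iff_lt_succ, Fin.forall_fin_succ]; omega
  · simp [Fin.forall_fin_succ]; omega

lemma contains_35214 (i₁ i₂ i₃ i₄ i₅ : Fin n)
    (h : i₁ < i₂ ∧ i₂ < i₃ ∧ i₃ < i₄ ∧ i₄ < i₅ ∧
      σ i₄ < σ i₃ ∧ σ i₃ < σ i₁ ∧ σ i₁ < σ i₅ ∧ σ i₅ < σ i₂) :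
    Contains σ ![3, 5, 2, 1, 4] := by
  refine contains_of_forall_lt (by decide) ![i₁, i₂, i₃, i₄, i₅] ?_ ?_
  · simp [Fin.strictMono_iff_lt_succ, Fin.forall_fin_succ]; omega
  · simp [Fin.forall_fin_succ]; omega

lemma contains_35241 (i₁ i₂ i₃ i₄ i₅ : Fin n)
    (h : i₁ < i₂ ∧ i₂ < i₃ ∧ i₃ < i₄ ∧ i₄ < i₅ ∧
      σ i₅ < σ i₃ ∧ σ i₃ < σ i₁ ∧ σ i₁ < σ i₄ ∧ σ i₄ < σ i₂) :
    Contains σ ![3, 5, 2, 4, 1] := by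
  refine contains_of_forall_lt (by decide) ![i₁, i₂, i₃, i₄, i₅] ?_ ?_
  · simp [Fin.strictMono_iff_lt_succ, Fin.forall_fin_succ]; omega
  · simp [Fin.forall_fin_succ]; omega

lemma contains_43152 (i₁ i₂ i₃ i₄ i₅ : Fin n)
    (h : i₁ < i₂ ∧ i₂ < i₃ ∧ i₃ < i₄ ∧ i₄ < i₅ ∧
      σ i₃ < σ i₅ ∧ σ i₅ < σ i₂ ∧ σ i₂ < σ i₁ ∧ σ i₁ < σ i₄) :
    Contains σ ![4, 3, 1, 5, 2] := by
  refine contains_of_forall_lt (by decide) ![i₁, i₂, i₃, i₄, i₅] ?_ ?_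
  · simp [Fin.strictMono_iff_lt_succ, Fin.forall_fin_succ]; omega
  · simp [Fin.forall_fin_succ]; omega

lemma contains_53142 (i₁ i₂ i₃ i₄ i₅ : Fin n)
    (h : i₁ < i₂ ∧ i₂ < i₃ ∧ i₃ < i₄ ∧ i₄ < i₅ ∧
      σ i₃ < σ i₅ ∧ σ i₅ < σ i₂ ∧ σ i₂ < σ i₄ ∧ σ i₄ < σ i₁) :
    Contains σ ![5, 3, 1, 4, 2] := by
  refine contains_of_forall_lt (by decide) ![i₁, i₂, i₃, i₄, i₅] ?_ ?_
  · simp [Fin.strictMono_iff_lt_succ, Fin.forall_fin_succ]; omega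
  · simp [Fin.forall_fin_succ]; omega

end Patterns

lemma Equiv.Perm.apply_lt_or_gt {α : Type*} [LinearOrder α] (σ : Equiv.Perm α) {i j : α}
    (h : i ≠ j) : σ i < σ j ∨ σ j < σ i :=
  lt_or_gt_of_ne (σ.injective.ne h)

namespace AvoidsBasisB

variable {n : ℕ} {σ : Equiv.Perm (Fin n)}

-- In use, `t` carries the largest value and `e` ends the increasing run that starts at `b`,
-- just after the descent at `d`.
lemma last_lt_inversion_top (hσ : AvoidsBasisB σ) {t p q d b e : Fin n}
    (hpq : p < q) (hqd : q ≤ d) (hdb : d < b) (hbe : b ≤ e) (htb : t < b)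
    (hqp : σ q < σ p) (hbd : σ b < σ d) (hrun : b < e → σ b < σ e)
    (het : σ e < σ t) (hdt : σ d ≤ σ t) : σ e < σ p := by
  by_contra! hpe
  replace hpe : σ p < σ e := hpe.lt_of_ne (σ.injective.ne (by omega))
  obtain hbe | rfl := hbe.lt_or_eq
  swap
  · have hqd : q < d := hqd.lt_of_ne (by rintro rfl; omega)
    exact hσ.avoids_2143 (contains_2143 p q d b (by omega))
  replace hrun := hrun hbe
  obtain htq | hqt := lt_or_gt_of_ne (show t ≠ q by rintro rfl; omega)
  swap
  · exact hσ.avoids_2143 (contains_2143 p q t e (by omega))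
  have htp : t ≠ p := by rintro rfl; omega
  obtain hpd | hdp := σ.apply_lt_or_gt (show p ≠ d by omega)
  swap
  · obtain htp | hpt := lt_or_gt_of_ne htp
    · exact hσ.avoids_4321 (contains_4321 t p d b (by omega))
    · exact hσ.avoids_35214 (contains_35214 p t d b e (by omega))
  replace hqd : q < d := hqd.lt_of_ne (by rintro rfl; omega)
  replace hdt : σ d < σ t := hdt.lt_of_ne (σ.injective.ne (by omega))
  obtain hpb | hbp := σ.apply_lt_or_gt (show p ≠ b by omega)
  · exact hσ.avoids_2143 (contains_2143 p q d b (by omega))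
  obtain hqb | hbq := σ.apply_lt_or_gt (show q ≠ b by omega)
  · obtain htp | hpt := lt_or_gt_of_ne htp
    · exact hσ.avoids_53142 (contains_53142 t p q d b (by omega))
    · exact hσ.avoids_35142 (contains_35142 p t q d b (by omega))
  · obtain htp | hpt := lt_or_gt_of_ne htp
    · exact hσ.avoids_4321 (contains_4321 t p q b (by omega))
    · exact hσ.avoids_35214 (contains_35214 p t q b e (by omega))

lemma inversion_bottom_lt_top (hσ : AvoidsBasisB σ) {p q p' q' d b : Fin n}
    (hpq : p < q) (hqd : q ≤ d) (hpq' : p' < q') (hqd' : q' ≤ d) (hdb : d < b)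
    (hqp : σ q < σ p) (hqp' : σ q' < σ p') (hbd : σ b < σ d) (hbp : σ b < σ p)
    (hbp' : σ b < σ p') : σ q' < σ p := by
  by_contra! hpq''
  obtain hpp' | rfl | hp'p := lt_trichotomy p p'
  · replace hpq'' : σ p < σ q' := hpq''.lt_of_ne (σ.injective.ne (by omega))
    obtain hqp' | rfl | hp'q := lt_trichotomy q p'
    · exact hσ.avoids_2143 (contains_2143 p q p' q' (by omega))
    · omega
    obtain hpd | hdp := σ.apply_lt_or_gt (show p ≠ d by omega)
    swap
    · replace hqd' : q' < d := hqd'.lt_of_ne (by rintro rfl; omega)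
      exact hσ.avoids_4321 (contains_4321 p' q' d b (by omega))
    replace hqd : q < d := hqd.lt_of_ne (by rintro rfl; omega)
    obtain hqq' | rfl | hq'q := lt_trichotomy q q'
    · obtain hqb | hbq := σ.apply_lt_or_gt (show q ≠ b by omega)
      · exact hσ.avoids_35142 (contains_35142 p p' q q' b (by omega))
      · exact hσ.avoids_35241 (contains_35241 p p' q q' b (by omega))
    · omega
    obtain hqb | hbq := σ.apply_lt_or_gt (show q ≠ b by omega)
    · obtain hp'd | hdp' := σ.apply_lt_or_gt (show p' ≠ d by omega)
      · exact hσ.avoids_43152 (contains_43152 p' q' q d b (by omega))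
      · exact hσ.avoids_35142 (contains_35142 p p' q d b (by omega))
    · exact hσ.avoids_4321 (contains_4321 p' q' q b (by omega))
  · exact absurd hqp' hpq''.not_gt
  obtain hpd | hdp := σ.apply_lt_or_gt (show p ≠ d by omega)
  swap
  · exact hσ.avoids_4321 (contains_4321 p' p d b (by omega))
  replace hqd : q < d := hqd.lt_of_ne (by rintro rfl; omega)
  obtain hqb | hbq := σ.apply_lt_or_gt (show q ≠ b by omega)
  · obtain hp'd | hdp' := σ.apply_lt_or_gt (show p' ≠ d by omega)
    · exact hσ.avoids_43152 (contains_43152 p' p q d b (by omega))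
    · exact hσ.avoids_53142 (contains_53142 p' p q d b (by omega))
  · exact hσ.avoids_4321 (contains_4321 p' p q b (by omega))

end AvoidsBasisB

section Construction

variable {n : ℕ} {σ : Equiv.Perm (Fin n)}

lemma apply_lt_of_forall_le_fixed {m : ℕ} (hfix : ∀ i : Fin n, m ≤ (i : ℕ) → σ i = i)
    {i : Fin n} (hi : (i : ℕ) < m) : (σ i : ℕ) < m := by
  by_contra! h
  have := σ.injective (hfix (σ i) h)
  omega

lemma inGrid_gridB_of_cuts {x₁ y₁ m : ℕ} (hx₁ : x₁ ≤ m) (hy₁ : y₁ ≤ m) (hm : m ≤ n)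
    (hfix : ∀ i : Fin n, m ≤ (i : ℕ) → σ i = i)
    (hrun : ∀ i j : Fin n, x₁ ≤ (i : ℕ) → i < j → (j : ℕ) < m → σ i < σ j)
    (hrun_lt : ∀ i : Fin n, x₁ ≤ (i : ℕ) → (i : ℕ) < m → (σ i : ℕ) < y₁)
    (hlow : ∀ i j : Fin n, i < j → (j : ℕ) < x₁ → (σ i : ℕ) < y₁ → (σ j : ℕ) < y₁ → σ i < σ j)
    (hhigh : ∀ i j : Fin n, i < j → (j : ℕ) < x₁ → y₁ ≤ (σ i : ℕ) → y₁ ≤ (σ j : ℕ) →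
      σ i < σ j) :
    InGrid gridB σ := by
  have hblock (i : Fin n) (hi : (i : ℕ) < m) := apply_lt_of_forall_le_fixed hfix hi
  refine ⟨![0, x₁, m, n], ![0, y₁, m, n], ?_, ?_, rfl, rfl, rfl, rfl, fun i j => ⟨?_, ?_, ?_, ?_⟩⟩
  · simp only [Fin.monotone_iff_le_succ, Fin.forall_fin_succ]; simp; omega
  · simp only [Fin.monotone_iff_le_succ, Fin.forall_fin_succ]; simp; omega
  · intro hz p ⟨hp₁, hp₂, hp₃, hp₄⟩
    have := hblock p
    have := hfix p
    have := hrun_lt p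
    fin_cases i <;> fin_cases j <;> simp [gridB] at hz hp₁ hp₂ hp₃ hp₄ <;> omega
  · intro hone p q hp hq hpq
    have := hrun p q
    have := hlow p q hpq
    have := hhigh p q hpq
    have := hfix p
    have := hfix q
    fin_cases i <;> fin_cases j <;> simp [gridB, InCell] at hone hp hq <;> omega
  all_goals fin_cases i <;> fin_cases j <;> simp [gridB]

lemma inGrid_gridB_of_inversion_tops {x₁ m v : ℕ} (hx₁ : x₁ ≤ m) (hv : v ≤ m) (hm : m ≤ n)
    (hfix : ∀ i : Fin n, m ≤ (i : ℕ) → σ i = i)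
    (hrun : ∀ i j : Fin n, x₁ ≤ (i : ℕ) → i < j → (j : ℕ) < m → σ i < σ j)
    (hrun_lt : ∀ i : Fin n, x₁ ≤ (i : ℕ) → (i : ℕ) < m → (σ i : ℕ) < v)
    (htop_ge : ∀ i j : Fin n, i < j → (j : ℕ) < x₁ → σ j < σ i → v ≤ (σ i : ℕ))
    (htop_gt : ∀ i j i' j' : Fin n, i < j → (j : ℕ) < x₁ → σ j < σ i →
      i' < j' → (j' : ℕ) < x₁ → σ j' < σ i' → σ j < σ i') :
    InGrid gridB σ := by
  classical
  -- the row cut is the least inversion top, or `m` if there is none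
  let IsBelowTops (y : ℕ) : Prop := ∀ i j : Fin n, i < j → (j : ℕ) < x₁ → σ j < σ i → y ≤ σ i
  have hy₁ : IsBelowTops (Nat.findGreatest IsBelowTops m) :=
    Nat.findGreatest_spec (Nat.zero_le m) fun _ _ _ _ _ => Nat.zero_le _
  have hvy : v ≤ Nat.findGreatest IsBelowTops m := Nat.le_findGreatest hv htop_ge
  refine inGrid_gridB_of_cuts hx₁ (Nat.findGreatest_le m) hm hfix hrun
    (fun i h₁ h₂ => (hrun_lt i h₁ h₂).trans_le hvy) ?_ ?_
  · intro i j hij hj hi _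
    obtain h | h := σ.apply_lt_or_gt hij.ne
    · exact h
    · exact absurd (hy₁ i j hij hj h) hi.not_ge
  · intro i j hij hj _ hj'
    obtain h | h := σ.apply_lt_or_gt hij.ne
    · exact h
    have hjm := apply_lt_of_forall_le_fixed hfix (show (j : ℕ) < m by omega)
    have := Nat.le_findGreatest (P := IsBelowTops) hjm (htop_gt i j · · hij hj h)
    omega

lemma exists_increasing_run (σ : Equiv.Perm (Fin n)) (e : Fin n) :
    ∃ b ≤ e, (∀ i j : Fin n, b ≤ i → i < j → j ≤ e → σ i < σ j) ∧
      (0 < (b : ℕ) → ∃ d : Fin n, (d : ℕ) + 1 = b ∧ σ b < σ d) := by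
  classical
  let IsRunStart (x : ℕ) : Prop := ∀ i j : Fin n, x ≤ (i : ℕ) → i < j → j ≤ e → σ i < σ j
  have hex : ∃ x, IsRunStart x := ⟨e, fun i j hi hij hj => by omega⟩
  have hle : Nat.find hex ≤ e := Nat.find_min' hex fun i j hi hij hj => by omega
  obtain ⟨b, hb⟩ : ∃ b : Fin n, (b : ℕ) = Nat.find hex := ⟨⟨Nat.find hex, by omega⟩, rfl⟩
  refine ⟨b, by omega, fun i j hi => Nat.find_spec hex i j (by omega), fun hb0 => ?_⟩
  obtain ⟨d, hd⟩ : ∃ d : Fin n, (d : ℕ) + 1 = b := ⟨⟨b - 1, by omega⟩, by simp; omega⟩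
  refine ⟨d, hd, ?_⟩
  have : ¬ IsRunStart d := Nat.find_min hex (by omega)
  simp only [IsRunStart, not_forall, not_lt] at this
  obtain ⟨i, j, hdi, hij, hje, hji⟩ := this
  obtain rfl : i = d := by
    by_contra h
    exact hji.not_gt (Nat.find_spec hex i j (by omega) hij hje)
  obtain hbj | rfl | hjb := lt_trichotomy b j
  · exact (Nat.find_spec hex b j hb.ge hbj hje).trans_le hji
  · exact hji.lt_of_ne (σ.injective.ne (by omega))
  · omega

lemma exists_minimal_fixed_suffix (σ : Equiv.Perm (Fin n)) :
    ∃ m ≤ n, (∀ i : Fin n, m ≤ (i : ℕ) → σ i = i) ∧ ∀ e : Fin n, (e : ℕ) + 1 = m → σ e ≠ e := by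
  classical
  have hex : ∃ m, ∀ i : Fin n, m ≤ (i : ℕ) → σ i = i := ⟨n, fun i hi => by omega⟩
  refine ⟨Nat.find hex, Nat.find_min' hex fun i hi => by omega, Nat.find_spec hex,
    fun e he hfix => Nat.find_min hex (show (e : ℕ) < Nat.find hex by omega) fun i hi => ?_⟩
  obtain rfl | hie := eq_or_ne i e
  · exact hfix
  · exact Nat.find_spec hex i (by omega)

lemma exists_lt_forall_apply_le {m : ℕ} (hfix : ∀ i : Fin n, m ≤ (i : ℕ) → σ i = i) {e : Fin n}
    (he : (e : ℕ) + 1 = m) (hlast : σ e ≠ e) : ∃ t < e, ∀ i ≤ e, σ i ≤ σ t := by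
  obtain ⟨t, ht⟩ : ∃ t, σ t = e := ⟨σ.symm e, σ.apply_symm_apply e⟩
  refine ⟨t, ?_, fun i hi => ?_⟩
  · by_contra! h
    obtain rfl | h := h.eq_or_lt
    · exact hlast ht
    · have := hfix t (by omega)
      omega
  · have := apply_lt_of_forall_le_fixed hfix (i := i) (by omega)
    omega

end Construction

theorem AvoidsBasisB.inGrid {n : ℕ} {σ : Equiv.Perm (Fin n)} (hσ : AvoidsBasisB σ) :
    InGrid gridB σ := by
  obtain ⟨m, hmn, hfix, hlast⟩ := exists_minimal_fixed_suffix σ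
  obtain rfl | hm := Nat.eq_zero_or_pos m
  · exact inGrid_gridB_of_inversion_tops (x₁ := 0) (v := 0) le_rfl le_rfl hmn hfix
      (by omega) (by omega) (by omega) (by omega)
  obtain ⟨e, he⟩ : ∃ e : Fin n, (e : ℕ) + 1 = m := ⟨⟨m - 1, by omega⟩, by simp; omega⟩
  obtain ⟨t, hte, hmax⟩ := exists_lt_forall_apply_le hfix he (hlast e he)
  obtain ⟨b, hbe, hrun, hdesc⟩ := exists_increasing_run σ e
  have hbe' : σ b ≤ σ e := by
    obtain h | rfl := hbe.lt_or_eq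
    · exact (hrun b e le_rfl h le_rfl).le
    · exact le_rfl
  have htb : t < b := by
    by_contra! h
    exact (hrun t e h hte le_rfl).not_ge (hmax e le_rfl)
  have htop_e (i j : Fin n) (hij : i < j) (hjb : j < b) (hji : σ j < σ i) : σ e < σ i := by
    obtain ⟨d, hd, hbd⟩ := hdesc (by omega)
    exact hσ.last_lt_inversion_top hij (by omega) (by omega) hbe htb hji hbd
      (hrun b e le_rfl · le_rfl) ((hmax e le_rfl).lt_of_ne (σ.injective.ne hte.ne'))
      (hmax d (by omega))
  refine inGrid_gridB_of_inversion_tops (x₁ := b) (v := (σ e : ℕ) + 1) (by omega)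
    (apply_lt_of_forall_le_fixed hfix (by omega)) hmn hfix
    (fun i j hi hij hj => hrun i j hi hij (by omega)) ?_ ?_ ?_
  · intro i hi him
    obtain h | rfl := (show i ≤ e by omega).lt_or_eq
    · have := hrun i e hi h le_rfl
      omega
    · omega
  · intro i j hij hj hji
    have := htop_e i j hij hj hji
    omega
  · intro i j i' j' hij hj hji hij' hj' hji'
    obtain ⟨d, hd, hbd⟩ := hdesc (by omega)
    have := htop_e i j hij hj hji
    have := htop_e i' j' hij' hj' hji'
    exact hσ.inversion_bottom_lt_top hij' (by omega) hij (by omega) (by omega) hji' hji hbd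
      (by omega) (by omega)

theorem gridB_basis :
    ∀ (n : ℕ) (σ : Equiv.Perm (Fin n)),
      InGrid gridB σ ↔
        (Avoids σ ![2, 1, 4, 3] ∧ Avoids σ ![4, 3, 2, 1] ∧
         Avoids σ ![3, 5, 1, 4, 2] ∧ Avoids σ ![3, 5, 2, 1, 4] ∧
         Avoids σ ![3, 5, 2, 4, 1] ∧ Avoids σ ![4, 3, 1, 5, 2] ∧
         Avoids σ ![5, 3, 1, 4, 2]) := by
  intro n σ
  constructor
  · intro hσ
    obtain ⟨h₁, h₂, h₃, h₄, h₅, h₆, h₇⟩ := AvoidsBasisB.of_inGrid hσ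
    exact ⟨h₁, h₂, h₃, h₄, h₅, h₆, h₇⟩
  · rintro ⟨h₁, h₂, h₃, h₄, h₅, h₆, h₇⟩
    exact AvoidsBasisB.inGrid ⟨h₁, h₂, h₃, h₄, h₅, h₆, h₇⟩
end

section
/- Every permutation σ of length n avoiding both 2143 and 4312 lies in the monotone grid class of the 2×2 matrix with entry 1 in cells (1,1), (1,2), (2,2) and entry −1 in cell (2,1) (cells written as (column, row), columns left to right, rows bottom to top). Equivalently, there exist a position cut 0 ≤ p ≤ n and a value cut 0 ≤ v ≤ n such that σ is increasing on the positions ≤ p with values ≤ v, increasing on the positions ≤ p with values > v, increasing on the positions > p with values > v, and decreasing on the positions > p with values ≤ v. -/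
def gridM : Fin 2 → Fin 2 → ℤ :=
  ![![1, 1], ![-1, 1]]

/-!
Avoiding 2143 says that of two inversions, the second weakly to the right of the first, the
lower entry of the second lies below the upper entry of the first; avoiding 4312 says the same
for an inversion followed by a non-inversion.

Let `p` be the least position such that, right of `p`, the lower entry of every inversion lies
below the upper entry of every non-inversion, and let `v` be one more than the largest lower
entry of an inversion that does not straddle `p`. Then neither upper cell contains an
inversion. An inversion in the lower left cell has upper entry at least `v`: against an
inversion right of `p` this is 2143, and against one left of `p` we chain 4312 and 2143
through the pair of pairs that witnesses the minimality of `p` at `p - 1`. A non-inversion in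
the lower right cell has upper entry at least `v` by 4312 and the choice of `p`.
-/

namespace Equiv.Perm

variable {n : ℕ} (σ : Equiv.Perm (Fin n))

theorem contains_2143 {i j a b : Fin n} (hij : i < j) (hja : j < a) (hab : a < b)
    (hji : σ j < σ i) (hib : σ i < σ b) (hba : σ b < σ a) : Contains σ ![2, 1, 4, 3] := by
  refine ⟨![i, j, a, b], by simp [strictMono_vecCons, *], fun x y => ?_⟩
  fin_cases x <;> fin_cases y <;> simp <;> order

theorem contains_4312 {a b c d : Fin n} (hab : a < b) (hbc : b < c) (hcd : c < d)
    (hba : σ b < σ a) (hcd' : σ c < σ d) (hdb : σ d < σ b) : Contains σ ![4, 3, 1, 2] := by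
  refine ⟨![a, b, c, d], by simp [strictMono_vecCons, *], fun x y => ?_⟩
  fin_cases x <;> fin_cases y <;> simp <;> order

variable {σ}

theorem lt_of_avoids_2143 (hσ : Avoids σ ![2, 1, 4, 3]) {i j a b : Fin n} (hij : i < j)
    (hja : j ≤ a) (hab : a < b) (hji : σ j < σ i) (hba : σ b < σ a) : σ b < σ i := by
  rcases hja.eq_or_lt with rfl | hja
  · exact hba.trans hji
  · refine lt_of_not_ge fun hib => hσ ?_
    have hib : σ i < σ b := hib.lt_of_ne (σ.injective.ne (hij.trans (hja.trans hab)).ne)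
    exact σ.contains_2143 hij hja hab hji hib hba

theorem lt_of_avoids_4312 (hσ : Avoids σ ![4, 3, 1, 2]) {a b c d : Fin n} (hab : a < b)
    (hbc : b ≤ c) (hcd : c < d) (hba : σ b < σ a) (hcd' : σ c < σ d) : σ b < σ d := by
  rcases hbc.eq_or_lt with rfl | hbc
  · exact hcd'
  · refine lt_of_not_ge fun hdb => hσ ?_
    have hdb : σ d < σ b := hdb.lt_of_ne (σ.injective.ne (hbc.trans hcd).ne')
    exact σ.contains_4312 hab hbc hcd hba hcd' hdb

variable (σ)

def InversionsBelowNoninversionsFrom (t : ℕ) : Prop :=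
  ∀ ⦃a b c d : Fin n⦄, t ≤ (a : ℕ) → a < b → σ b < σ a → t ≤ (c : ℕ) → c < d → σ c < σ d →
    σ b < σ d

theorem inversionsBelowNoninversionsFrom_self : σ.InversionsBelowNoninversionsFrom n :=
  fun a _ _ _ ha => absurd ha (not_le.2 a.isLt)

noncomputable def positionCut : ℕ := sInf {t | σ.InversionsBelowNoninversionsFrom t}

theorem positionCut_le : σ.positionCut ≤ n :=
  Nat.sInf_le σ.inversionsBelowNoninversionsFrom_self

theorem inversionsBelowNoninversionsFrom_positionCut :
    σ.InversionsBelowNoninversionsFrom σ.positionCut :=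
  Nat.sInf_mem (s := {t | σ.InversionsBelowNoninversionsFrom t})
    ⟨n, σ.inversionsBelowNoninversionsFrom_self⟩

theorem not_inversionsBelowNoninversionsFrom_of_lt_positionCut {t : ℕ} (ht : t < σ.positionCut) :
    ¬ σ.InversionsBelowNoninversionsFrom t :=
  Nat.notMem_of_lt_sInf ht

def InversionsWithinColumnsBelow (w : ℕ) : Prop :=
  ∀ ⦃a b : Fin n⦄, a < b → σ b < σ a → ((b : ℕ) < σ.positionCut ∨ σ.positionCut ≤ (a : ℕ)) →
    (σ b : ℕ) < w

noncomputable def valueCut : ℕ := sInf {w | σ.InversionsWithinColumnsBelow w}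

theorem valueCut_le_of {w : ℕ} (hw : σ.InversionsWithinColumnsBelow w) : σ.valueCut ≤ w :=
  Nat.sInf_le hw

theorem valueCut_le : σ.valueCut ≤ n :=
  σ.valueCut_le_of fun _ b _ _ _ => (σ b).isLt

theorem lt_valueCut {a b : Fin n} (hab : a < b) (hba : σ b < σ a)
    (hcol : (b : ℕ) < σ.positionCut ∨ σ.positionCut ≤ (a : ℕ)) : (σ b : ℕ) < σ.valueCut :=
  Nat.sInf_mem (s := {w | σ.InversionsWithinColumnsBelow w}) ⟨n, fun _ b _ _ _ => (σ b).isLt⟩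
    hab hba hcol

variable {σ}

theorem valueCut_le_of_inversion_left (h2143 : Avoids σ ![2, 1, 4, 3])
    (h4312 : Avoids σ ![4, 3, 1, 2]) {q r : Fin n} (hqr : q < r) (hrq : σ r < σ q)
    (hrp : (r : ℕ) < σ.positionCut) : σ.valueCut ≤ σ q := by
  refine σ.valueCut_le_of fun a b hab hba hcol => ?_
  rcases hcol with hbp | hpa
  · obtain ⟨a', b', c, d, ha', hab', hba', hc, hcd, hcd', hdb'⟩ : ∃ a' b' c' d' : Fin n,
        σ.positionCut - 1 ≤ (a' : ℕ) ∧ a' < b' ∧ σ b' < σ a' ∧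
        σ.positionCut - 1 ≤ (c' : ℕ) ∧ c' < d' ∧ σ c' < σ d' ∧ σ d' ≤ σ b' := by
      have := σ.not_inversionsBelowNoninversionsFrom_of_lt_positionCut (t := σ.positionCut - 1)
        (by omega)
      simpa [InversionsBelowNoninversionsFrom] using this
    calc σ b < σ d := lt_of_avoids_4312 h4312 hab (by omega) hcd hba hcd'
      _ ≤ σ b' := hdb'
      _ < σ q := lt_of_avoids_2143 h2143 hqr (by omega) hab' hrq hba'
  · exact lt_of_avoids_2143 h2143 hqr (by omega) hab hrq hba

theorem valueCut_le_of_noninversion_right (h4312 : Avoids σ ![4, 3, 1, 2]) {q r : Fin n}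
    (hqr : q < r) (hqr' : σ q < σ r) (hpq : σ.positionCut ≤ (q : ℕ)) : σ.valueCut ≤ σ r := by
  refine σ.valueCut_le_of fun a b hab hba hcol => ?_
  rcases hcol with hbp | hpa
  · exact lt_of_avoids_4312 h4312 hab (by omega) hqr hba hqr'
  · exact σ.inversionsBelowNoninversionsFrom_positionCut hpa hab hba hpq hqr hqr'

variable (σ)

theorem inGrid_gridM_of_cuts {p v : ℕ} (hp : p ≤ n) (hv : v ≤ n)
    (h00 : ∀ q r : Fin n, q < r → (r : ℕ) < p → (σ q : ℕ) < v → (σ r : ℕ) < v → σ q < σ r)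
    (h01 : ∀ q r : Fin n, q < r → (r : ℕ) < p → v ≤ (σ q : ℕ) → v ≤ (σ r : ℕ) → σ q < σ r)
    (h10 : ∀ q r : Fin n, q < r → p ≤ (q : ℕ) → (σ q : ℕ) < v → (σ r : ℕ) < v → σ r < σ q)
    (h11 : ∀ q r : Fin n, q < r → p ≤ (q : ℕ) → v ≤ (σ q : ℕ) → v ≤ (σ r : ℕ) → σ q < σ r) :
    InGrid gridM σ := by
  refine ⟨![0, p, n], ![0, v, n], by simp [monotone_vecCons, hp], by simp [monotone_vecCons, hv],
    rfl, rfl, rfl, rfl, fun i j => ?_⟩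
  fin_cases i <;> fin_cases j <;> simp [gridM, InCell]
  exacts [fun q r _ hqv hrp hrv hqr => h00 q r hqr hrp hqv hrv,
    fun q r _ hqv hrp hrv hqr => h01 q r hqr hrp hqv hrv,
    fun q r hpq hqv _ hrv hqr => h10 q r hqr hpq hqv hrv,
    fun q r hpq hqv _ hrv hqr => h11 q r hqr hpq hqv hrv]

end Equiv.Perm

theorem av_2143_4312_in_two_by_two_grid :
    ∀ (n : ℕ) (σ : Equiv.Perm (Fin n)),
      Avoids σ ![2, 1, 4, 3] → Avoids σ ![4, 3, 1, 2] → InGrid gridM σ := by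
  intro n σ h2143 h4312
  have lt_of_not_inversion {q r : Fin n} (hqr : q < r) (h : ¬ σ r < σ q) : σ q < σ r :=
    (σ.injective.ne hqr.ne).lt_or_gt.resolve_right h
  refine σ.inGrid_gridM_of_cuts σ.positionCut_le σ.valueCut_le ?_ ?_ ?_ ?_
  · intro q r hqr hrp hqv _
    exact lt_of_not_inversion hqr fun hrq =>
      (Equiv.Perm.valueCut_le_of_inversion_left h2143 h4312 hqr hrq hrp).not_gt hqv
  · intro q r hqr hrp _ hrv
    exact lt_of_not_inversion hqr fun hrq => (σ.lt_valueCut hqr hrq (.inl hrp)).not_ge hrv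
  · intro q r hqr hpq _ hrv
    refine ((σ.injective.ne hqr.ne).lt_or_gt.resolve_left fun hqr' => ?_)
    exact (Equiv.Perm.valueCut_le_of_noninversion_right h4312 hqr hqr' hpq).not_gt hrv
  · intro q r hqr hpq _ hrv
    exact lt_of_not_inversion hqr fun hrq => (σ.lt_valueCut hqr hrq (.inr hpq)).not_ge hrv
end
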